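/- arXiv:2104.12082 — 2 statements merged into one kernel-verified Lean document; each statement's English description precedes it below -/
import Mathlib

section
/- Let p ≥ 1 and m ≥ 14. Then the Kronecker product K_{1,m} × K_p of the star K_{1,m} with the complete graph K_p is hypoenergetic, i.e., ε(K_{1,m} × K_p) = 4√m·(p−1) < p(m+1). -/
open Matrix SimpleGraph Finset

variable {V W : Type*}

/-- The adjacency matrix of a simple graph over ℝ is Hermitian. -/
lemma adjMatrix_isHermitian [Fintype V] [DecidableEq V] (G : SimpleGraph V)
    [DecidableRel G.Adj] : (G.adjMatrix ℝ).IsHermitian := by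
  rw [Matrix.IsHermitian, Matrix.conjTranspose_eq_transpose_of_trivial]
  exact G.isSymm_adjMatrix

/-- The energy of a finite simple graph: the sum of the absolute values of the
eigenvalues of its real adjacency matrix. -/
noncomputable def graphEnergy [Fintype V] [DecidableEq V] (G : SimpleGraph V) : ℝ := by
  classical
  exact ∑ i, |(adjMatrix_isHermitian G).eigenvalues i|

/-- The spectrum of a finite simple graph: the multiset of eigenvalues (with
multiplicity) of its real adjacency matrix. -/
noncomputable def graphSpectrum [Fintype V] [DecidableEq V] (G : SimpleGraph V) : Multiset ℝ := by
  classical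
  exact Finset.univ.val.map (adjMatrix_isHermitian G).eigenvalues

/-- A graph is integral if every eigenvalue of its adjacency matrix is an integer. -/
def IsIntegralGraph [Fintype V] [DecidableEq V] (G : SimpleGraph V) : Prop :=
  ∀ x ∈ graphSpectrum G, ∃ k : ℤ, x = (k : ℝ)

/-- The m-shadow graph of `G`, on vertex set `Fin m × V`: `(i,u)` and `(j,v)` are
adjacent iff `u` and `v` are adjacent in `G`. -/
def shadowGraph (m : ℕ) (G : SimpleGraph V) : SimpleGraph (Fin m × V) where
  Adj x y := G.Adj x.2 y.2
  symm := ⟨fun _ _ h => h.symm⟩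
  loopless := ⟨fun _ h => G.loopless.irrefl _ h⟩

/-- The duplicate graph of `G`, on vertex set `V ⊕ V`: `inl a` is adjacent to
`inr b` iff `a` and `b` are adjacent in `G`; no other adjacencies. -/
def duplicateGraph (G : SimpleGraph V) : SimpleGraph (V ⊕ V) where
  Adj x y :=
    match x, y with
    | Sum.inl a, Sum.inr b => G.Adj a b
    | Sum.inr a, Sum.inl b => G.Adj a b
    | _, _ => False
  symm := ⟨by rintro (a | a) (b | b) h <;> first | exact h.symm | exact h.elim⟩
  loopless := ⟨by rintro (a | a) h <;> exact h⟩

/-- The Kronecker (tensor) product of two simple graphs. -/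
def tensorGraph (G : SimpleGraph V) (H : SimpleGraph W) : SimpleGraph (V × W) where
  Adj x y := G.Adj x.1 y.1 ∧ H.Adj x.2 y.2
  symm := ⟨fun _ _ h => ⟨h.1.symm, h.2.symm⟩⟩
  loopless := ⟨fun _ h => G.loopless.irrefl _ h.1⟩

/-- The m-splitting graph of `G`, on vertex set `V ⊕ (Fin m × V)`: original
vertices keep their adjacencies, an original vertex `u` is adjacent to a copy
`(i,v)` iff `u` is adjacent to `v` in `G`, and copies are pairwise non-adjacent. -/
def splittingGraph (m : ℕ) (G : SimpleGraph V) : SimpleGraph (V ⊕ (Fin m × V)) where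
  Adj x y :=
    match x, y with
    | Sum.inl u, Sum.inl v => G.Adj u v
    | Sum.inl u, Sum.inr iv => G.Adj u iv.2
    | Sum.inr iu, Sum.inl v => G.Adj iu.2 v
    | Sum.inr _, Sum.inr _ => False
  symm := ⟨by rintro (u | iu) (v | iv) h <;> first | exact h.symm | exact h.elim⟩
  loopless := ⟨by rintro (u | iu) h <;> first | exact G.loopless.irrefl _ h | exact h⟩

/-- The join of two simple graphs: their disjoint union together with all edges
between the two parts. -/
def joinGraph (G : SimpleGraph V) (H : SimpleGraph W) : SimpleGraph (V ⊕ W) where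
  Adj x y :=
    match x, y with
    | Sum.inl a, Sum.inl b => G.Adj a b
    | Sum.inr a, Sum.inr b => H.Adj a b
    | _, _ => True
  symm := ⟨by rintro (a | a) (b | b) h <;> first | exact h.symm | trivial⟩
  loopless := ⟨by rintro (a | a) h <;> first | exact G.loopless.irrefl _ h | exact H.loopless.irrefl _ h⟩

/-- The superpath graph on a sequence of part sizes: independent sets `W i` of
size `a i`, where vertices in parts `i` and `j` are adjacent iff `|i - j| = 1`. -/
def superpathGraph {t : ℕ} (a : Fin t → ℕ) : SimpleGraph (Σ i : Fin t, Fin (a i)) where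
  Adj x y := (x.1 : ℕ) + 1 = (y.1 : ℕ) ∨ (y.1 : ℕ) + 1 = (x.1 : ℕ)
  symm := ⟨fun _ _ h => h.symm⟩
  loopless := ⟨fun x h => by omega⟩

/-! The adjacency matrix of `G × H` is the Kronecker product of those of `G` and `H`, so
conjugating by the Kronecker product of their eigenbases diagonalizes it with eigenvalues
`λᵢ μⱼ`; hence `ε(G × H) = ε(G) ε(H)`. The star `K_{1,m}` has spectrum `±√m, 0^{m-1}` and `K_p`
has spectrum `p - 1, (-1)^{p-1}`, so `ε(K_{1,m} × K_p) = 2√m · 2(p - 1)`, and this is below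
`p(m + 1)` because `4√m ≤ m + 1` once `m ≥ 14`. -/

theorem adjMatrix_tensorGraph {α : Type*} [MulZeroOneClass α] (G : SimpleGraph V)
    (H : SimpleGraph W) [DecidableRel G.Adj] [DecidableRel H.Adj]
    [DecidableRel (tensorGraph G H).Adj] :
    (tensorGraph G H).adjMatrix α = kroneckerMap (· * ·) (G.adjMatrix α) (H.adjMatrix α) := by
  ext ⟨v, w⟩ ⟨v', w'⟩
  have hAdj : (tensorGraph G H).Adj (v, w) (v', w') ↔ G.Adj v v' ∧ H.Adj w w' := Iff.rfl
  by_cases hG : G.Adj v v' <;> by_cases hH : H.Adj w w' <;> simp [hAdj, hG, hH]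

theorem Matrix.IsHermitian.mul_eigenvectorUnitary {𝕜 n : Type*} [RCLike 𝕜] [Fintype n]
    [DecidableEq n] {A : Matrix n n 𝕜} (hA : A.IsHermitian) :
    A * (hA.eigenvectorUnitary : Matrix n n 𝕜) =
      (hA.eigenvectorUnitary : Matrix n n 𝕜) * diagonal (RCLike.ofReal ∘ hA.eigenvalues) := by
  conv_lhs => enter [1]; rw [hA.spectral_theorem]
  simp [Unitary.conjStarAlgAut_apply, Matrix.mul_assoc]

open Polynomial in
theorem Matrix.IsHermitian.eigenvalues_map_eq_of_mul_eq_mul_diagonal {n : Type*} [Fintype n]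
    [DecidableEq n] {A P Q : Matrix n n ℝ} {d : n → ℝ} (hA : A.IsHermitian) (hQP : Q * P = 1)
    (hAP : A * P = P * diagonal d) :
    univ.val.map hA.eigenvalues = univ.val.map d := by
  have hA_eq : A = P * (diagonal d * Q) := by
    rw [← Matrix.mul_assoc, ← hAP, Matrix.mul_assoc, mul_eq_one_comm.mp hQP, Matrix.mul_one]
  have hchar : A.charpoly = (diagonal d).charpoly := by
    rw [hA_eq, charpoly_mul_comm, Matrix.mul_assoc, hQP, Matrix.mul_one]
  have hroots := hA.roots_charpoly_eq_eigenvalues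
  rw [hchar, charpoly_diagonal,
    roots_prod _ _ (by simp [Finset.prod_ne_zero_iff, X_sub_C_ne_zero])] at hroots
  simpa using hroots.symm

theorem graphEnergy_eq_of_mul_eq_mul_diagonal [Fintype V] [DecidableEq V] (G : SimpleGraph V)
    [inst : DecidableRel G.Adj] {P Q : Matrix V V ℝ} {d : V → ℝ} (hQP : Q * P = 1)
    (hAP : G.adjMatrix ℝ * P = P * diagonal d) :
    graphEnergy G = ∑ v, |d v| := by
  classical
  -- `graphEnergy` is defined through the classical decidability instance.
  obtain rfl : inst = fun a b => Classical.propDecidable (G.Adj a b) := Subsingleton.elim _ _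
  have h := (adjMatrix_isHermitian G).eigenvalues_map_eq_of_mul_eq_mul_diagonal hQP hAP
  calc graphEnergy G = ((univ.val.map (adjMatrix_isHermitian G).eigenvalues).map abs).sum := by
        rw [Multiset.map_map]; rfl
    _ = ∑ v, |d v| := by rw [h, Multiset.map_map]; rfl

theorem graphEnergy_tensorGraph [Fintype V] [DecidableEq V] [Fintype W] [DecidableEq W]
    (G : SimpleGraph V) (H : SimpleGraph W) :
    graphEnergy (tensorGraph G H) = graphEnergy G * graphEnergy H := by
  classical
  set hG := adjMatrix_isHermitian G
  set hH := adjMatrix_isHermitian H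
  have hQP : (kroneckerMap (· * ·) (star (hG.eigenvectorUnitary : Matrix V V ℝ))
      (star (hH.eigenvectorUnitary : Matrix W W ℝ))) *
      kroneckerMap (· * ·) hG.eigenvectorUnitary hH.eigenvectorUnitary = 1 := by
    rw [← mul_kronecker_mul, Unitary.coe_star_mul_self, Unitary.coe_star_mul_self,
      one_kronecker_one]
  rw [graphEnergy_eq_of_mul_eq_mul_diagonal _ hQP
    (d := fun x => hG.eigenvalues x.1 * hH.eigenvalues x.2)]
  · change _ = (∑ i, |hG.eigenvalues i|) * ∑ j, |hH.eigenvalues j|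
    rw [Fintype.sum_prod_type, Finset.sum_mul_sum]
    simp only [abs_mul]
  · rw [adjMatrix_tensorGraph, ← mul_kronecker_mul, hG.mul_eigenvectorUnitary,
      hH.mul_eigenvectorUnitary, mul_kronecker_mul, diagonal_kronecker_diagonal]
    rfl

-- Columns: the all-ones vector (eigenvalue `n`) and the vectors `e k - e 0` (eigenvalue `-1`).
def completeEigenbasis (n : ℕ) : Matrix (Fin (n + 1)) (Fin (n + 1)) ℝ :=
  of fun i k => if k = 0 then 1 else if i = k then 1 else if i = 0 then -1 else 0

noncomputable def completeEigenbasisInv (n : ℕ) : Matrix (Fin (n + 1)) (Fin (n + 1)) ℝ :=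
  of fun k i => if k = 0 then 1 / (n + 1) else (if i = k then 1 else 0) - 1 / (n + 1)

theorem completeEigenbasisInv_mul (n : ℕ) :
    completeEigenbasisInv n * completeEigenbasis n = 1 := by
  have h0 (i : Fin n) : (0 : Fin (n + 1)) ≠ i.succ := (Fin.succ_ne_zero i).symm
  have hn : (n + 1 : ℝ) ≠ 0 := by positivity
  ext k c
  cases k using Fin.cases <;> cases c using Fin.cases <;>
    simp [completeEigenbasis, completeEigenbasisInv, mul_apply, Fin.sum_univ_succ, one_apply,
      Fin.succ_ne_zero, h0, hn, eq_comm]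

theorem adjMatrix_top_mul_completeEigenbasis (n : ℕ) :
    (⊤ : SimpleGraph (Fin (n + 1))).adjMatrix ℝ * completeEigenbasis n =
      completeEigenbasis n * diagonal (fun k => if k = 0 then (n : ℝ) else -1) := by
  have h0 (i : Fin n) : (0 : Fin (n + 1)) ≠ i.succ := (Fin.succ_ne_zero i).symm
  rw [adjMatrix_completeGraph_eq_of_one_sub_one, sub_mul, Matrix.one_mul]
  ext i c
  rw [mul_diagonal]
  cases i using Fin.cases <;> cases c using Fin.cases <;>
    simp [completeEigenbasis, mul_apply, Fin.sum_univ_succ, Fin.succ_ne_zero, h0]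

-- Columns: `(±√(n+1), 1, …, 1)` (eigenvalues `±√(n+1)`) and `(0, e k - e 0)` (eigenvalue `0`).
noncomputable def starEigenbasis (n : ℕ) :
    Matrix (Fin 1 ⊕ Fin (n + 1)) (Fin 1 ⊕ Fin (n + 1)) ℝ :=
  fromBlocks (of fun _ _ => √(n + 1)) (of fun _ k => if k = 0 then -√(n + 1) else 0)
    (of fun _ _ => 1) (completeEigenbasis n)

noncomputable def starEigenbasisInv (n : ℕ) :
    Matrix (Fin 1 ⊕ Fin (n + 1)) (Fin 1 ⊕ Fin (n + 1)) ℝ :=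
  fromBlocks (of fun _ _ => 1 / (2 * √(n + 1))) (of fun _ _ => 1 / (2 * (n + 1)))
    (of fun k _ => if k = 0 then -1 / (2 * √(n + 1)) else 0)
    (of fun k i => if k = 0 then 1 / (2 * (n + 1)) else (if i = k then 1 else 0) - 1 / (n + 1))

theorem starEigenbasisInv_mul (n : ℕ) : starEigenbasisInv n * starEigenbasis n = 1 := by
  have h0 (i : Fin n) : (0 : Fin (n + 1)) ≠ i.succ := (Fin.succ_ne_zero i).symm
  have hn : (n + 1 : ℝ) ≠ 0 := by positivity
  ext (k | k) (c | c)
  · obtain rfl := Subsingleton.elim k c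
    simp [starEigenbasis, starEigenbasisInv, mul_apply]
    field_simp
    ring
  · cases c using Fin.cases <;>
      simp [starEigenbasis, starEigenbasisInv, completeEigenbasis, mul_apply, Fin.sum_univ_succ,
        h0, hn]
    field_simp
    ring
  · cases k using Fin.cases <;>
      simp [starEigenbasis, starEigenbasisInv, completeEigenbasis, mul_apply, hn]
    field_simp
    ring
  · cases k using Fin.cases <;> cases c using Fin.cases <;>
      simp [starEigenbasis, starEigenbasisInv, completeEigenbasis, mul_apply, Fin.sum_univ_succ,
        one_apply, h0, hn, eq_comm]
    field_simp
    ring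

theorem adjMatrix_star_mul_starEigenbasis (n : ℕ)
    [DecidableRel (completeBipartiteGraph (Fin 1) (Fin (n + 1))).Adj] :
    (completeBipartiteGraph (Fin 1) (Fin (n + 1))).adjMatrix ℝ * starEigenbasis n =
      starEigenbasis n *
        diagonal (Sum.elim (fun _ => √(n + 1)) (fun k => if k = 0 then -√(n + 1) else 0)) := by
  have h0 (i : Fin n) : (0 : Fin (n + 1)) ≠ i.succ := (Fin.succ_ne_zero i).symm
  have hs : √(n + 1 : ℝ) * √(n + 1) = n + 1 := Real.mul_self_sqrt (by positivity)
  ext (k | k) (c | c) <;> rw [mul_diagonal]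
  · simp [starEigenbasis, mul_apply, hs]
  · cases c using Fin.cases <;>
      simp [starEigenbasis, completeEigenbasis, mul_apply, Fin.sum_univ_succ, h0, hs]
  · simp [starEigenbasis, mul_apply]
  · cases c using Fin.cases <;> simp [starEigenbasis, completeEigenbasis, mul_apply]

theorem graphEnergy_top_fin_succ (n : ℕ) :
    graphEnergy (⊤ : SimpleGraph (Fin (n + 1))) = 2 * n := by
  rw [graphEnergy_eq_of_mul_eq_mul_diagonal _ (completeEigenbasisInv_mul n)
    (adjMatrix_top_mul_completeEigenbasis n)]
  simp [Fin.sum_univ_succ]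
  ring

theorem graphEnergy_star_fin_succ (n : ℕ) :
    graphEnergy (completeBipartiteGraph (Fin 1) (Fin (n + 1))) = 2 * √(n + 1) := by
  classical
  rw [graphEnergy_eq_of_mul_eq_mul_diagonal _ (starEigenbasisInv_mul n)
    (adjMatrix_star_mul_starEigenbasis n)]
  simp [Fin.sum_univ_succ, abs_of_nonneg, Real.sqrt_nonneg]
  ring

theorem four_mul_sqrt_mul_sub_one_lt {x y : ℝ} (hx : 14 ≤ x) (hy : 1 ≤ y) :
    4 * √x * (y - 1) < y * (x + 1) := by
  have hsqrt : 4 * √x ≤ x + 1 := by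
    nlinarith [Real.sq_sqrt (by linarith : 0 ≤ x), sq_nonneg (√x - 4)]
  calc 4 * √x * (y - 1) ≤ (x + 1) * (y - 1) := by gcongr
    _ < y * (x + 1) := by nlinarith

/-- For `p ≥ 1` and `m ≥ 14`, the Kronecker product `K_{1,m} × K_p` is
hypoenergetic: its energy equals `4√m · (p - 1)`, which is less than its order
`p * (m + 1)`. -/
theorem tensor_star_complete_hypoenergetic (p m : ℕ) (hp : 1 ≤ p) (hm : 14 ≤ m) :
    graphEnergy (tensorGraph (completeBipartiteGraph (Fin 1) (Fin m))
        (⊤ : SimpleGraph (Fin p))) = 4 * Real.sqrt m * ((p : ℝ) - 1) ∧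
      4 * Real.sqrt m * ((p : ℝ) - 1) < (p : ℝ) * (m + 1) := by
  refine ⟨?_, four_mul_sqrt_mul_sub_one_lt (by exact_mod_cast hm) (by exact_mod_cast hp)⟩
  obtain ⟨q, rfl⟩ := Nat.exists_eq_add_of_le' hp
  obtain ⟨n, rfl⟩ := Nat.exists_eq_add_of_le' (by omega : 1 ≤ m)
  rw [graphEnergy_tensorGraph, graphEnergy_star_fin_succ, graphEnergy_top_fin_succ]
  push_cast
  ring
end

section
/- Let G be a graph of order p with at least one edge and let m ≥ 1. Then the graphs D_m(D(G)) and D_{2m}(G) both have 2mp vertices, have equal energies (namely 2m·ε(G)), and are non-cospectral. -/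
open Matrix SimpleGraph Finset

variable {V W : Type*}

/-! The adjacency matrix of `D_m(H)` is `J_m ⊗ A(H) = S * R`, where `S` stacks `m` identity
blocks and `R` places `m` copies of `A(H)` side by side. Since `R * S = m • A(H)`, the spectrum
of `D_m(H)` is `m • spec H` together with `(m - 1) |V|` zeros. Conjugating by
`[[1, 1], [1, -1]]` gives `spec D(G) = spec G + (-spec G)`. So `D_m(D(G))` has spectrum
`±m • spec G` plus zeros and `D_{2m}(G)` has `2m • spec G` plus zeros: the energies agree,
while the sums of squared eigenvalues are `2m²T` and `4m²T`, where `T = ∑ λ² > 0` because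
`A(G) ≠ 0`. -/

namespace Matrix
open Polynomial Kronecker

variable {R : Type*} [CommRing R] {n ι : Type*} [Fintype n] [DecidableEq n]

theorem charpoly_fromBlocks_zero_self_self_zero [Invertible (2 : R)] (A : Matrix n n R) :
    (fromBlocks 0 A A 0).charpoly = A.charpoly * (-A).charpoly := by
  set P : Matrix (n ⊕ n) (n ⊕ n) R := fromBlocks 1 1 1 (-1)
  set Q : Matrix (n ⊕ n) (n ⊕ n) R := ⅟(2 : R) • P
  have hPP : P * P = (2 : R) • 1 := by
    simp [P, fromBlocks_multiply, ← fromBlocks_one, ← one_add_one_eq_two, add_smul,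
      fromBlocks_add]
  have hPQ : P * Q = 1 := by
    simp [Q, hPP, smul_smul]
  have hQP : Q * P = 1 := by
    simp [Q, hPP, smul_smul]
  have hconj : fromBlocks 0 A A 0 = P * fromBlocks A 0 0 (-A) * Q := by
    have : fromBlocks 0 A A 0 * P = P * fromBlocks A 0 0 (-A) := by
      simp [P, fromBlocks_multiply]
    rw [← this, mul_assoc, hPQ, mul_one]
  rw [hconj, charpoly_mul_comm, ← mul_assoc, hQP, one_mul, charpoly_fromBlocks_zero₁₂]

theorem charpoly_ones_kronecker [Fintype ι] [DecidableEq ι] [Nonempty ι] (A : Matrix n n R) :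
    ((of fun _ _ => 1 : Matrix ι ι R) ⊗ₖ A).charpoly =
      X ^ ((Fintype.card ι - 1) * Fintype.card n) * ((Fintype.card ι : R) • A).charpoly := by
  let idStack : Matrix (ι × n) n R := of fun p v => (1 : Matrix n n R) p.2 v
  let row : Matrix n (ι × n) R := of fun u q => A u q.2
  have hfactor : (of fun _ _ => 1 : Matrix ι ι R) ⊗ₖ A = idStack * row := by
    ext ⟨i, u⟩ ⟨j, v⟩
    simp [idStack, row, mul_apply, one_apply]
  have hswap : row * idStack = (Fintype.card ι : R) • A := by
    ext u v
    simp [idStack, row, mul_apply, one_apply, Fintype.sum_prod_type]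
  have hcard : Fintype.card n ≤ Fintype.card (ι × n) := by
    rw [Fintype.card_prod]; exact Nat.le_mul_of_pos_left _ Fintype.card_pos
  rw [hfactor, charpoly_mul_comm_of_le _ _ hcard, hswap, Fintype.card_prod, Nat.sub_one_mul]

theorem IsHermitian.roots_charpoly_smul {𝕜 : Type*} [RCLike 𝕜] {A : Matrix n n 𝕜}
    (hA : A.IsHermitian) (c : 𝕜) :
    (c • A).charpoly.roots = A.charpoly.roots.map (c * ·) := by
  have hdiag : c • A = (hA.eigenvectorUnitary : Matrix n n 𝕜) *
      diagonal (fun i => c * hA.eigenvalues i) *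
      star (hA.eigenvectorUnitary : Matrix n n 𝕜) := by
    have : diagonal (fun i => c * (hA.eigenvalues i : 𝕜)) =
        c • diagonal (RCLike.ofReal ∘ hA.eigenvalues) := by
      rw [← diagonal_smul]; rfl
    conv_lhs => rw [hA.spectral_theorem, Unitary.conjStarAlgAut_apply]
    rw [this]
    simp only [Matrix.mul_smul, Matrix.smul_mul]
  rw [hdiag, charpoly_mul_comm, ← mul_assoc, Unitary.coe_star_mul_self, one_mul,
    charpoly_diagonal, roots_prod _ _ (prod_ne_zero_iff.mpr fun i _ => X_sub_C_ne_zero _),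
    hA.roots_charpoly_eq_eigenvalues]
  simp only [roots_X_sub_C, Multiset.bind_singleton, Multiset.map_map]
  rfl

end Matrix

namespace SimpleGraph
open Polynomial Kronecker

variable [Fintype V] [DecidableEq V]

theorem graphSpectrum_eq_roots_charpoly (G : SimpleGraph V) [DecidableRel G.Adj] :
    graphSpectrum G = (G.adjMatrix ℝ).charpoly.roots := by
  rw [(adjMatrix_isHermitian G).roots_charpoly_eq_eigenvalues, graphSpectrum]
  simp only [RCLike.ofReal_real_eq_id, Function.comp_apply, id_eq]
  congr!

theorem graphEnergy_eq_sum_abs (G : SimpleGraph V) :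
    graphEnergy G = ((graphSpectrum G).map (|·|)).sum := by
  rw [graphEnergy, graphSpectrum, Multiset.map_map, Finset.sum_eq_multiset_sum]
  rfl

theorem graphSpectrum_shadowGraph (m : ℕ) [NeZero m] (G : SimpleGraph V) :
    graphSpectrum (shadowGraph m G) =
      Multiset.replicate ((m - 1) * Fintype.card V) 0 + (graphSpectrum G).map ((m : ℝ) * ·) := by
  classical
  have hadj : (shadowGraph m G).adjMatrix ℝ =
      (of fun _ _ => 1 : Matrix (Fin m) (Fin m) ℝ) ⊗ₖ G.adjMatrix ℝ := by
    ext ⟨i, u⟩ ⟨j, v⟩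
    rw [adjMatrix_apply]
    simp only [shadowGraph, kroneckerMap_apply, of_apply, adjMatrix_apply, one_mul]
    congr!
  rw [graphSpectrum_eq_roots_charpoly, graphSpectrum_eq_roots_charpoly, hadj,
    charpoly_ones_kronecker, roots_mul ((monic_X_pow _).mul (charpoly_monic _)).ne_zero,
    roots_X_pow, (adjMatrix_isHermitian G).roots_charpoly_smul, Fintype.card_fin,
    Multiset.nsmul_singleton]

theorem graphSpectrum_duplicateGraph (G : SimpleGraph V) :
    graphSpectrum (duplicateGraph G) = graphSpectrum G + (graphSpectrum G).map (- ·) := by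
  classical
  have hadj :
      (duplicateGraph G).adjMatrix ℝ = fromBlocks 0 (G.adjMatrix ℝ) (G.adjMatrix ℝ) 0 := by
    ext (a | a) (b | b) <;> rw [adjMatrix_apply] <;>
      simp only [duplicateGraph, fromBlocks_apply₁₁, fromBlocks_apply₁₂, fromBlocks_apply₂₁,
        fromBlocks_apply₂₂, adjMatrix_apply, Matrix.zero_apply, ↓reduceIte] <;> congr!
  rw [graphSpectrum_eq_roots_charpoly, graphSpectrum_eq_roots_charpoly, hadj,
    charpoly_fromBlocks_zero_self_self_zero,
    roots_mul ((charpoly_monic _).mul (charpoly_monic _)).ne_zero,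
    ← neg_one_smul ℝ (G.adjMatrix ℝ), (adjMatrix_isHermitian G).roots_charpoly_smul]
  simp

theorem sum_map_graphSpectrum_shadowGraph (m : ℕ) [NeZero m] (G : SimpleGraph V) {f : ℝ → ℝ}
    (hf : f 0 = 0) :
    ((graphSpectrum (shadowGraph m G)).map f).sum =
      ((graphSpectrum G).map fun x => f (m * x)).sum := by
  simp [graphSpectrum_shadowGraph, hf, Multiset.map_map]

theorem sum_map_graphSpectrum_duplicateGraph (G : SimpleGraph V) (f : ℝ → ℝ) :
    ((graphSpectrum (duplicateGraph G)).map f).sum =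
      ((graphSpectrum G).map fun x => f x + f (-x)).sum := by
  simp [graphSpectrum_duplicateGraph, Multiset.sum_map_add, Multiset.map_map]

theorem graphEnergy_shadowGraph (m : ℕ) [NeZero m] (G : SimpleGraph V) :
    graphEnergy (shadowGraph m G) = m * graphEnergy G := by
  simp [graphEnergy_eq_sum_abs, sum_map_graphSpectrum_shadowGraph, abs_mul,
    Multiset.sum_map_mul_left]

theorem graphEnergy_duplicateGraph (G : SimpleGraph V) :
    graphEnergy (duplicateGraph G) = 2 * graphEnergy G := by
  simp [graphEnergy_eq_sum_abs, sum_map_graphSpectrum_duplicateGraph, ← two_mul,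
    Multiset.sum_map_mul_left]

theorem sum_sq_graphSpectrum_shadowGraph (m : ℕ) [NeZero m] (G : SimpleGraph V) :
    ((graphSpectrum (shadowGraph m G)).map (· ^ 2)).sum =
      (m : ℝ) ^ 2 * ((graphSpectrum G).map (· ^ 2)).sum := by
  simp [sum_map_graphSpectrum_shadowGraph, mul_pow, Multiset.sum_map_mul_left]

theorem sum_sq_graphSpectrum_duplicateGraph (G : SimpleGraph V) :
    ((graphSpectrum (duplicateGraph G)).map (· ^ 2)).sum =
      2 * ((graphSpectrum G).map (· ^ 2)).sum := by
  simp [sum_map_graphSpectrum_duplicateGraph, ← two_mul, Multiset.sum_map_mul_left]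

theorem sum_sq_graphSpectrum_pos (G : SimpleGraph V) {u v : V} (huv : G.Adj u v) :
    0 < ((graphSpectrum G).map (· ^ 2)).sum := by
  classical
  have hA : (adjMatrix_isHermitian G).eigenvalues ≠ 0 := by
    rw [Ne, (adjMatrix_isHermitian G).eigenvalues_eq_zero_iff]
    intro h
    simpa [huv] using congr_fun₂ h u v
  obtain ⟨i, hi⟩ := Function.ne_iff.mp hA
  rw [graphSpectrum_eq_roots_charpoly, (adjMatrix_isHermitian G).roots_charpoly_eq_eigenvalues,
    Multiset.map_map, ← Finset.sum_eq_multiset_sum]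
  exact Finset.sum_pos' (fun j _ => sq_nonneg _) ⟨i, mem_univ _, sq_pos_of_ne_zero hi⟩

end SimpleGraph

/-- If `G` is a graph of order `p` with at least one edge and `m ≥ 1`, then
`D_m(D(G))` and `D_{2m}(G)` both have `2 * m * p` vertices, their energies are
both equal to `2m · ε(G)`, and they are non-cospectral. -/
theorem shadow_duplicate_equienergetic_noncospectral [Fintype V] [DecidableEq V]
    (G : SimpleGraph V) (p m : ℕ) (hp : Fintype.card V = p)
    (hedge : ∃ u v, G.Adj u v) (hm : 1 ≤ m) :
    Fintype.card (Fin m × (V ⊕ V)) = 2 * m * p ∧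
      Fintype.card (Fin (2 * m) × V) = 2 * m * p ∧
      graphEnergy (shadowGraph m (duplicateGraph G)) = 2 * (m : ℝ) * graphEnergy G ∧
      graphEnergy (shadowGraph (2 * m) G) = 2 * (m : ℝ) * graphEnergy G ∧
      graphSpectrum (shadowGraph m (duplicateGraph G)) ≠ graphSpectrum (shadowGraph (2 * m) G) := by
  have : NeZero m := ⟨by omega⟩
  obtain ⟨u, v, huv⟩ := hedge
  refine ⟨by rw [Fintype.card_prod, Fintype.card_sum, Fintype.card_fin, hp]; ring,
    by rw [Fintype.card_prod, Fintype.card_fin, hp], ?_, ?_, fun hspec => ?_⟩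
  · rw [graphEnergy_shadowGraph, graphEnergy_duplicateGraph]
    ring
  · rw [graphEnergy_shadowGraph]
    push_cast
    ring
  · have hsq := congrArg (fun s => (s.map (· ^ 2)).sum) hspec
    simp only [sum_sq_graphSpectrum_shadowGraph, sum_sq_graphSpectrum_duplicateGraph] at hsq
    have hpos := sum_sq_graphSpectrum_pos G huv
    have hm0 : (0 : ℝ) < m := by exact_mod_cast hm
    push_cast at hsq
    nlinarith [mul_pos (pow_pos hm0 2) hpos]
end
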